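/- Verification of the recurrence for the auxiliary function f: the function f(n;z₁,z₂,z) = f_n [z₁]![z₂]! ∑_t (-1)^t q^{t(2p+1−z)} [z choose t]_q ([2p₁−z₁+t; t]! [2p₂−z₂+z−t; z−t]!)/([z₁−t]![z₂−z+t]!) satisfies the recurrence f(n;z₁,z₂+1,z+1) = −[z₁]_q[2p₁+1−z₁]_q q^{2p−2z} f(n;z₁−1,z₂+1,z) + [2p₂−z₂]_q[z₂+1]_q f(n;z₁,z₂,z), as a consequence of the q-Pascal identity [n−1 choose m]_q + q^{±n}[n−1 choose m−1]_q = q^{±m}[n choose m]_q. -/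

import Mathlib

open Finset

/-- `q^x` for complex exponent, via `exp (x log q)`. -/
noncomputable def Qp (q x : ℂ) : ℂ := Complex.exp (x * Complex.log q)

/-- q-integer `[x]_q = (q^x - q^{-x})/(q - q⁻¹)`. -/
noncomputable def qint (q x : ℂ) : ℂ := (Qp q x - Qp q (-x)) / (q - q⁻¹)

/-- q-factorial `[n]_q! = ∏_{k=1}^n [k]_q`. -/
noncomputable def qfact (q : ℂ) (n : ℕ) : ℂ := ∏ k ∈ Finset.Icc 1 n, qint q (k : ℂ)

/-- q-binomial coefficient for natural arguments, `[m]!/([m-k]![k]!)`. -/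
noncomputable def qchoose (q : ℂ) (m k : ℕ) : ℂ := qfact q m / (qfact q (m - k) * qfact q k)

/-- falling q-factorial `[α; k]! = ∏_{j=0}^{k-1} [α-j]_q`. -/
noncomputable def qfall (q α : ℂ) (k : ℕ) : ℂ := ∏ j ∈ Finset.range k, qint q (α - (j : ℂ))

/-- generalized q-binomial `[α choose k]_q = [α;k]!/[k]!`. -/
noncomputable def qbinom (q α : ℂ) (k : ℕ) : ℂ := qfall q α k / qfact q k

/-- The auxiliary function `f(n; z₁, z₂, z)` from Racah's derivation of the CGC,
with `p = p₁ + p₂ - n` and an arbitrary constant `fn` depending only on `n`;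
the sum over `t` is supported where the factorials in the denominator are defined. -/
noncomputable def auxf (q p₁ p₂ fn : ℂ) (n z₁ z₂ z : ℕ) : ℂ :=
  fn * qfact q z₁ * qfact q z₂ *
    ∑ t ∈ (Finset.range (z + 1)).filter fun t => t ≤ z₁ ∧ z ≤ z₂ + t,
      (-1 : ℂ) ^ t * Qp q ((t : ℂ) * (2 * (p₁ + p₂ - (n : ℂ)) + 1 - (z : ℂ))) *
        qchoose q z t *
        qfall q (2 * p₁ - (z₁ : ℂ) + (t : ℂ)) t *
        qfall q (2 * p₂ - (z₂ : ℂ) + (z : ℂ) - (t : ℂ)) (z - t) /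
        (qfact q (z₁ - t) * qfact q (z₂ + t - z))

/-! Expand `[z+1 choose t]_q` in the sum defining `f(n; z₁, z₂+1, z+1)` by q-Pascal,
`[z+1 choose t] = q^t [z choose t] + q^(t-z-1) [z choose t-1]`, where q-Pascal itself is
`[z+1] = q^t [z+1-t] + q^(t-z-1) [t]`. In the first part the top factor `[2p₂-z₂]` of the falling
factorial splits off, and with `[z₂+1]! = [z₂]! [z₂+1]` what is left is the sum for `f(n; z₁, z₂, z)`.
In the second part the shift `t ↦ t+1` splits off `[2p₁+1-z₁]` and a sign, the powers of `q`
collect to `q^(2p-2z)`, and with `[z₁]! = [z₁-1]! [z₁]` what is left is the sum for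
`f(n; z₁-1, z₂+1, z)`. -/

section QCalculus

variable (q : ℂ)

lemma Qp_zero : Qp q 0 = 1 := by simp [Qp]

lemma Qp_add (x y : ℂ) : Qp q (x + y) = Qp q x * Qp q y := by
  simp [Qp, add_mul, Complex.exp_add]

lemma qint_zero : qint q 0 = 0 := by simp [qint, Qp]

lemma qint_eq_Qp_mul_qint_sub_add (a b : ℂ) :
    qint q a = Qp q b * qint q (a - b) + Qp q (b - a) * qint q b := by
  simp only [qint, mul_div_assoc', ← add_div, mul_sub, ← Qp_add]
  ring_nf

lemma qfact_zero : qfact q 0 = 1 := by simp [qfact]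

lemma qfact_succ (n : ℕ) : qfact q (n + 1) = qfact q n * qint q ((n : ℂ) + 1) := by
  rw [qfact, prod_Icc_succ_top (by omega)]
  push_cast
  rfl

lemma qfall_succ (α : ℂ) (k : ℕ) : qfall q α (k + 1) = qfall q α k * qint q (α - k) :=
  prod_range_succ _ _

variable {q} (hq : ∀ k : ℕ, 1 ≤ k → qint q (k : ℂ) ≠ 0)
include hq

lemma qint_natCast_add_one_ne_zero (n : ℕ) : qint q ((n : ℂ) + 1) ≠ 0 := by
  exact_mod_cast hq (n + 1) (by omega)

lemma qfact_ne_zero (n : ℕ) : qfact q n ≠ 0 :=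
  prod_ne_zero_iff.2 fun k hk => hq k (mem_Icc.1 hk).1

lemma qchoose_zero_right (m : ℕ) : qchoose q m 0 = 1 := by
  rw [qchoose, Nat.sub_zero, qfact_zero, mul_one, div_self (qfact_ne_zero hq m)]

lemma qchoose_self (m : ℕ) : qchoose q m m = 1 := by
  rw [qchoose, Nat.sub_self, qfact_zero, one_mul, div_self (qfact_ne_zero hq m)]

lemma qchoose_succ {z t : ℕ} (h1 : 1 ≤ t) (h2 : t ≤ z) :
    qchoose q (z + 1) t =
      Qp q t * qchoose q z t + Qp q ((t : ℂ) - ((z : ℂ) + 1)) * qchoose q z (t - 1) := by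
  obtain ⟨s, rfl⟩ := Nat.exists_eq_add_of_le' h1
  obtain ⟨r, rfl⟩ := Nat.exists_eq_add_of_le h2
  have hsplit := qint_eq_Qp_mul_qint_sub_add q ((s : ℂ) + 1 + r + 1) ((s : ℂ) + 1)
  have := qfact_ne_zero hq s
  have := qfact_ne_zero hq r
  have := qint_natCast_add_one_ne_zero hq s
  have := qint_natCast_add_one_ne_zero hq r
  simp only [qchoose, show s + 1 + r + 1 - (s + 1) = r + 1 by omega,
    show s + 1 + r - (s + 1) = r by omega, show s + 1 + r - s = r + 1 by omega,
    Nat.add_sub_cancel, qfact_succ q (s + 1 + r), qfact_succ q r, qfact_succ q s]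
  rw [show (s : ℂ) + 1 + r + 1 - (s + 1) = r + 1 by ring] at hsplit
  push_cast
  field_simp
  rw [hsplit]
  ring

/-- The `if`s are needed because `qchoose q z t` is a nonzero junk value for `t > z`. -/
lemma qchoose_succ_eq_ite {z t : ℕ} (ht : t ≤ z + 1) :
    qchoose q (z + 1) t =
      (if t ≤ z then Qp q t * qchoose q z t else 0) +
        (if 1 ≤ t then Qp q ((t : ℂ) - ((z : ℂ) + 1)) * qchoose q z (t - 1) else 0) := by
  rcases Nat.eq_zero_or_pos t with rfl | h1
  · simp [qchoose_zero_right hq, Qp_zero]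
  rcases ht.lt_or_eq with h2 | rfl
  · rw [if_pos (by omega), if_pos (show 1 ≤ t from h1), qchoose_succ hq h1 (by omega)]
  · simp [qchoose_self hq, Qp_zero]

lemma sum_qchoose_succ_mul {z : ℕ} (s : Finset ℕ) (hs : ∀ t ∈ s, t ≤ z + 1) (f : ℕ → ℂ) :
    ∑ t ∈ s, qchoose q (z + 1) t * f t =
      ∑ t ∈ s with t ≤ z, Qp q t * qchoose q z t * f t +
        ∑ t ∈ s with 1 ≤ t, Qp q ((t : ℂ) - ((z : ℂ) + 1)) * qchoose q z (t - 1) * f t := by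
  rw [sum_filter, sum_filter, ← sum_add_distrib]
  refine sum_congr rfl fun t ht => ?_
  rw [qchoose_succ_eq_ite hq (hs t ht), add_mul, ite_mul, ite_mul, zero_mul]

end QCalculus

section AuxiliaryFunction

variable (q p p₁ p₂ : ℂ)

def auxSupport (z₁ z₂ z : ℕ) : Finset ℕ := {t ∈ range (z + 1) | t ≤ z₁ ∧ z ≤ z₂ + t}

noncomputable def auxWeight (z₁ z₂ z t : ℕ) : ℂ :=
  (-1 : ℂ) ^ t * Qp q ((t : ℂ) * (2 * p + 1 - (z : ℂ))) *
    qfall q (2 * p₁ - (z₁ : ℂ) + (t : ℂ)) t *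
    qfall q (2 * p₂ - (z₂ : ℂ) + (z : ℂ) - (t : ℂ)) (z - t) /
    (qfact q (z₁ - t) * qfact q (z₂ + t - z))

lemma auxf_eq_sum (fn : ℂ) (n z₁ z₂ z : ℕ) :
    auxf q p₁ p₂ fn n z₁ z₂ z = fn * qfact q z₁ * qfact q z₂ *
      ∑ t ∈ auxSupport z₁ z₂ z, qchoose q z t * auxWeight q (p₁ + p₂ - n) p₁ p₂ z₁ z₂ z t := by
  unfold auxf auxWeight auxSupport
  congr 1
  exact sum_congr rfl fun t _ => by ring

variable {q p p₁ p₂}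

lemma le_of_mem_auxSupport {z₁ z₂ z t : ℕ} (ht : t ∈ auxSupport z₁ z₂ z) : t ≤ z := by
  simp only [auxSupport, mem_filter, mem_range] at ht
  omega

lemma filter_le_auxSupport (z₁ z₂ z : ℕ) :
    {t ∈ auxSupport z₁ (z₂ + 1) (z + 1) | t ≤ z} = auxSupport z₁ z₂ z := by
  ext t
  simp only [auxSupport, mem_filter, mem_range]
  omega

lemma filter_one_le_auxSupport_zero (z₂ z : ℕ) : {t ∈ auxSupport 0 z₂ z | 1 ≤ t} = ∅ := by
  ext t
  simp only [auxSupport, mem_filter, mem_range, notMem_empty, iff_false]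
  omega

lemma filter_one_le_auxSupport_succ (m z₂ z : ℕ) :
    {t ∈ auxSupport (m + 1) (z₂ + 1) (z + 1) | 1 ≤ t} =
      (auxSupport m (z₂ + 1) z).map (addRightEmbedding 1) := by
  ext t
  simp only [auxSupport, mem_filter, mem_range, mem_map, addRightEmbedding_apply]
  constructor
  · rintro ⟨⟨_, _, _⟩, _⟩
    exact ⟨t - 1, ⟨by omega, by omega, by omega⟩, by omega⟩
  · rintro ⟨s, ⟨_, _, _⟩, rfl⟩
    exact ⟨⟨by omega, by omega, by omega⟩, by omega⟩

lemma Qp_mul_auxWeight_of_le {z₁ z₂ z t : ℕ} (ht : t ≤ z) :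
    Qp q t * auxWeight q p p₁ p₂ z₁ (z₂ + 1) (z + 1) t =
      qint q (2 * p₂ - z₂) * auxWeight q p p₁ p₂ z₁ z₂ z t := by
  obtain ⟨r, rfl⟩ := Nat.exists_eq_add_of_le ht
  have hexp : Qp q t * Qp q (t * (2 * p + 1 - ((t + r + 1 : ℕ) : ℂ))) =
      Qp q (t * (2 * p + 1 - ((t + r : ℕ) : ℂ))) := by
    rw [← Qp_add]
    congr 1
    push_cast
    ring
  simp only [auxWeight, show t + r + 1 - t = r + 1 by omega, Nat.add_sub_cancel_left,
    show z₂ + 1 + t - (t + r + 1) = z₂ + t - (t + r) by omega, qfall_succ]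
  rw [show 2 * p₂ - ((z₂ + 1 : ℕ) : ℂ) + ((t + r + 1 : ℕ) : ℂ) - t =
      2 * p₂ - z₂ + ((t + r : ℕ) : ℂ) - t by push_cast; ring,
    show 2 * p₂ - z₂ + ((t + r : ℕ) : ℂ) - t - r = 2 * p₂ - z₂ by push_cast; ring, ← hexp]
  ring

lemma Qp_mul_auxWeight_succ (m z₂ z s : ℕ) :
    Qp q (((s + 1 : ℕ) : ℂ) - ((z : ℂ) + 1)) * auxWeight q p p₁ p₂ (m + 1) (z₂ + 1) (z + 1) (s + 1) =
      -(qint q (2 * p₁ + 1 - ((m + 1 : ℕ) : ℂ)) * Qp q (2 * p - 2 * z)) *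
        auxWeight q p p₁ p₂ m (z₂ + 1) z s := by
  have hexp : Qp q (((s + 1 : ℕ) : ℂ) - ((z : ℂ) + 1)) *
      Qp q (((s + 1 : ℕ) : ℂ) * (2 * p + 1 - ((z + 1 : ℕ) : ℂ))) =
      Qp q (2 * p - 2 * z) * Qp q (s * (2 * p + 1 - z)) := by
    rw [← Qp_add, ← Qp_add]
    congr 1
    push_cast
    ring
  simp only [auxWeight, Nat.add_sub_add_right, show z₂ + 1 + (s + 1) - (z + 1) = z₂ + 1 + s - z by omega,
    qfall_succ, pow_succ]
  rw [show 2 * p₁ - ((m + 1 : ℕ) : ℂ) + ((s + 1 : ℕ) : ℂ) = 2 * p₁ - m + s by push_cast; ring,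
    show 2 * p₁ - m + s - s = 2 * p₁ + 1 - ((m + 1 : ℕ) : ℂ) by push_cast; ring,
    show 2 * p₂ - ((z₂ + 1 : ℕ) : ℂ) + ((z + 1 : ℕ) : ℂ) - ((s + 1 : ℕ) : ℂ) =
      2 * p₂ - ((z₂ + 1 : ℕ) : ℂ) + z - s by push_cast; ring]
  linear_combination -((-1) ^ s * qfall q (2 * p₁ - m + s) s * qint q (2 * p₁ + 1 - ((m + 1 : ℕ) : ℂ)) *
    qfall q (2 * p₂ - ((z₂ + 1 : ℕ) : ℂ) + z - s) (z - s) /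
    (qfact q (m - s) * qfact q (z₂ + 1 + s - z))) * hexp

lemma sum_filter_le_auxSupport (z₁ z₂ z : ℕ) :
    ∑ t ∈ auxSupport z₁ (z₂ + 1) (z + 1) with t ≤ z,
        Qp q t * qchoose q z t * auxWeight q p p₁ p₂ z₁ (z₂ + 1) (z + 1) t =
      qint q (2 * p₂ - z₂) * ∑ t ∈ auxSupport z₁ z₂ z, qchoose q z t * auxWeight q p p₁ p₂ z₁ z₂ z t := by
  rw [filter_le_auxSupport, mul_sum]
  refine sum_congr rfl fun t ht => ?_
  rw [mul_right_comm, Qp_mul_auxWeight_of_le (le_of_mem_auxSupport ht)]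
  ring

lemma sum_filter_one_le_auxSupport_succ (m z₂ z : ℕ) :
    ∑ t ∈ auxSupport (m + 1) (z₂ + 1) (z + 1) with 1 ≤ t,
        Qp q ((t : ℂ) - ((z : ℂ) + 1)) * qchoose q z (t - 1) *
          auxWeight q p p₁ p₂ (m + 1) (z₂ + 1) (z + 1) t =
      -(qint q (2 * p₁ + 1 - ((m + 1 : ℕ) : ℂ)) * Qp q (2 * p - 2 * z)) *
        ∑ s ∈ auxSupport m (z₂ + 1) z, qchoose q z s * auxWeight q p p₁ p₂ m (z₂ + 1) z s := by
  rw [filter_one_le_auxSupport_succ, sum_map, mul_sum]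
  refine sum_congr rfl fun s _ => ?_
  rw [addRightEmbedding_apply, Nat.add_sub_cancel, mul_right_comm, Qp_mul_auxWeight_succ]
  ring

end AuxiliaryFunction

theorem auxf_recurrence_general (q p₁ p₂ fn : ℂ) (n z₁ z₂ z : ℕ)
    (hgen : ∀ k : ℕ, 1 ≤ k → qint q (k : ℂ) ≠ 0) :
    auxf q p₁ p₂ fn n z₁ (z₂ + 1) (z + 1) =
      -(qint q (z₁ : ℂ) * qint q (2 * p₁ + 1 - (z₁ : ℂ))) *
          Qp q (2 * (p₁ + p₂ - (n : ℂ)) - 2 * (z : ℂ)) *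
          auxf q p₁ p₂ fn n (z₁ - 1) (z₂ + 1) z +
        qint q (2 * p₂ - (z₂ : ℂ)) * qint q ((z₂ : ℂ) + 1) * auxf q p₁ p₂ fn n z₁ z₂ z := by
  simp only [auxf_eq_sum]
  rw [sum_qchoose_succ_mul hgen _ fun t ht => le_of_mem_auxSupport ht, sum_filter_le_auxSupport,
    qfact_succ q z₂]
  rcases z₁ with _ | m
  · rw [filter_one_le_auxSupport_zero, sum_empty, Nat.cast_zero, qint_zero]
    ring
  · rw [sum_filter_one_le_auxSupport_succ, qfact_succ q m, Nat.add_sub_cancel]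
    push_cast
    ring

theorem auxf_recurrence (q p₁ p₂ fn : ℂ) (n z₁ z₂ z : ℕ)
    (hq : q ≠ 0) (hq2 : q ^ 2 ≠ 1)
    (hgen : ∀ k : ℕ, 1 ≤ k → qint q (k : ℂ) ≠ 0) :
    auxf q p₁ p₂ fn n z₁ (z₂ + 1) (z + 1) =
      -(qint q (z₁ : ℂ) * qint q (2 * p₁ + 1 - (z₁ : ℂ))) *
          Qp q (2 * (p₁ + p₂ - (n : ℂ)) - 2 * (z : ℂ)) *
          auxf q p₁ p₂ fn n (z₁ - 1) (z₂ + 1) z +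
        qint q (2 * p₂ - (z₂ : ℂ)) * qint q ((z₂ : ℂ) + 1) * auxf q p₁ p₂ fn n z₁ z₂ z :=
  auxf_recurrence_general q p₁ p₂ fn n z₁ z₂ z hgen
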